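/- Let Π be an even-near-critical centrally symmetric allowable sequence of 2n points in noncentral general position with central signature (d₁,...,dₜ) and first crossing switch in the first move. Define δ₁ = 0, δ₂ = d₁+d₂, and δᵢ = d₁+2d₂+⋯+2d_{i-1}+dᵢ for i ≥ 3. Then the i-th crossing switch (reversing sᵢ) occurs in move δᵢ +1 counting from π_{δᵢ} to π_{δᵢ+1}; equivalently, between the i-th and (i+1)-th crossing switches there are exactly dᵢ + d_{i+1} - 1 permutations. -/

import Mathlib

/-- `σ` is obtained from `ρ` by reversing disjoint substrings of consecutive positions:
every position lies in an interval `[a,b]` of positions that gets reversed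
(a trivial interval `a = b` accounts for untouched positions).
Permutations send points to positions (`0`-indexed). -/
def IsIntervalReversalStep (N : ℕ) (ρ σ : Fin N ≃ Fin N) : Prop :=
  ∀ j : Fin N, ∃ a b : ℕ, a ≤ (j : ℕ) ∧ (j : ℕ) ≤ b ∧ b < N ∧
    ∀ p : Fin N, a ≤ ((ρ p : ℕ)) → ((ρ p : ℕ)) ≤ b → ((σ p : ℕ)) = a + b - ((ρ p : ℕ))

/-- An allowable sequence on `N` points: a doubly-infinite sequence of permutations
(point `p` occupies position `perm i p` in the `i`-th permutation), where
`perm (i + h)` is the reversal of `perm i`, consecutive permutations differ by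
simultaneous reversals of disjoint consecutive substrings, and every pair of points
switches (i.e. reverses its relative order) exactly once per halfperiod. -/
structure AllowableSeq (N : ℕ) where
  perm : ℤ → (Fin N ≃ Fin N)
  h : ℕ
  h_pos : 0 < h
  reversal : ∀ (i : ℤ) (p : Fin N), ((perm (i + h)) p : ℕ) = N - 1 - ((perm i) p : ℕ)
  step : ∀ i : ℤ, IsIntervalReversalStep N (perm (i - 1)) (perm i)
  flip_once : ∀ p q : Fin N, p ≠ q →
    ∃! i : ℤ, i ∈ Finset.Icc 1 (h : ℤ) ∧
      ¬ (((perm (i - 1)) p < (perm (i - 1)) q) ↔ ((perm i) p < (perm i) q))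

/-- The pair of points `p, q` switches (participates in a common switch) in the
`i`-th move, i.e. their relative order is reversed from `perm (i-1)` to `perm i`. -/
def Flips {N : ℕ} (A : AllowableSeq N) (i : ℤ) (p q : Fin N) : Prop :=
  ¬ (((A.perm (i - 1)) p < (A.perm (i - 1)) q) ↔ ((A.perm i) p < (A.perm i) q))

/-- `A` is centrally symmetric with conjugation `conj`: the positions of a point and
its conjugate always sum to `N - 1` (i.e. `2n + 1` with `1`-indexed positions). -/
def CentSym {N : ℕ} (A : AllowableSeq N) (conj : Fin N → Fin N) : Prop :=
  ∀ (i : ℤ) (p : Fin N), ((A.perm i) p : ℕ) + ((A.perm i) (conj p) : ℕ) = N - 1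

/-- The `i`-th move of `A` (an allowable sequence on `2n` points) contains a crossing
switch reversing a centered substring of `2d` points, occupying positions
`n - d, …, n + d - 1`; maximality of the reversed centered substring is required. -/
def CrossingAt (n : ℕ) (A : AllowableSeq (2 * n)) (i : ℤ) (d : ℕ) : Prop :=
  1 ≤ d ∧ d ≤ n ∧
  (∀ p : Fin (2 * n), n - d ≤ ((A.perm (i - 1)) p : ℕ) → ((A.perm (i - 1)) p : ℕ) < n + d →
      ((A.perm i) p : ℕ) = 2 * n - 1 - ((A.perm (i - 1)) p : ℕ)) ∧
  (d = n ∨ ∀ p : Fin (2 * n), ((A.perm (i - 1)) p : ℕ) = n - d - 1 →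
      ((A.perm i) p : ℕ) ≠ n + d)

/-- `A` has central signature `(d 0, …, d (t-1))`, witnessed by the strictly increasing
sequence `m 0 < ⋯ < m (t-1)` of moves of the halfperiod `1, …, 2n` containing the
crossing switches, the `i`-th reversing `2 * d i` points; no other move contains a
crossing switch. -/
def HasCentralSignature (n t : ℕ) (A : AllowableSeq (2 * n)) (d : Fin t → ℕ)
    (m : Fin t → ℤ) : Prop :=
  StrictMono m ∧ (∀ i, m i ∈ Finset.Icc (1 : ℤ) (2 * n)) ∧
  (∀ i, CrossingAt n A (m i) (d i)) ∧
  (∀ j : ℤ, j ∈ Finset.Icc (1 : ℤ) (2 * n) → (∀ i, j ≠ m i) → ∀ e, ¬ CrossingAt n A j e)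

/-- `A` is in noncentral general position: every switch other than a crossing switch is
a transposition, i.e. every point that moves in a move either moves by exactly one
position or takes part in the crossing switch of that move. -/
def NoncentralGenPos (n : ℕ) (A : AllowableSeq (2 * n)) : Prop :=
  ∀ (i : ℤ) (p : Fin (2 * n)), ((A.perm i) p : ℕ) ≠ ((A.perm (i - 1)) p : ℕ) →
    (((A.perm i) p : ℕ) + 1 = ((A.perm (i - 1)) p : ℕ) ∨
      ((A.perm (i - 1)) p : ℕ) + 1 = ((A.perm i) p : ℕ)) ∨
    ∃ e, CrossingAt n A i e ∧ n - e ≤ ((A.perm (i - 1)) p : ℕ) ∧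
      ((A.perm (i - 1)) p : ℕ) < n + e


/-!
By central symmetry a point switches with its conjugate exactly in the move in which it passes
from the positions `< n` to the positions `≥ n` or back, so every point crosses the center once
per halfperiod. In noncentral general position this only happens in crossing switches, and the
one of half-length `d i` carries `2 * d i` points across, whence `∑ d i = n`. Between two
consecutive crossing switches of half-lengths `a` and `b` points move by at most one position
per move and stay on their side, which forces a gap of at least `a + b` moves; this also holds
cyclically, from the last crossing switch to the first one of the next halfperiod. These `t`
gaps add up to the halfperiod `2 * n = 2 * ∑ d i`, so every one of these bounds is attained.
-/

open Finset

lemma cyclic_gap_eq_of_le_of_sum_eq {t : ℕ} (m g : Fin (t + 1) → ℤ) (P : ℤ)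
    (hle : ∀ i, g i ≤ m (finRotate _ i) - m i + if i = Fin.last t then P else 0)
    (hsum : ∑ i, g i = P) (i : Fin (t + 1)) :
    g i = m (finRotate _ i) - m i + if i = Fin.last t then P else 0 := by
  have htotal : ∑ i, (m (finRotate _ i) - m i + if i = Fin.last t then P else 0) = P := by
    rw [sum_add_distrib, sum_sub_distrib, Equiv.sum_comp (finRotate _) m, sub_self, zero_add]
    simp
  exact (sum_eq_sum_iff_of_le fun i _ => hle i).mp (hsum.trans htotal.symm) i (mem_univ i)

lemma eq_closed_form_of_succ_sub_eq {t : ℕ} (ht : 0 < t) (d : Fin t → ℕ) (m : Fin t → ℤ)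
    (h0 : m ⟨0, ht⟩ = 1) (hsucc : ∀ i j : Fin t, (i : ℕ) + 1 = j → m j - m i = d i + d j)
    (i : Fin t) :
    m i = (if (i : ℕ) = 0 then 0 else
      (d ⟨0, ht⟩ : ℤ) + 2 * (∑ j ∈ Ioo ⟨0, ht⟩ i, (d j : ℤ)) + d i) + 1 := by
  obtain ⟨k, hk⟩ : ∃ k, (i : ℕ) = k := ⟨_, rfl⟩
  induction k generalizing i with
  | zero =>
    obtain rfl : i = ⟨0, ht⟩ := Fin.ext hk
    simpa using h0
  | succ k ih =>
    have hkt : k < t := by omega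
    have hstep := hsucc ⟨k, hkt⟩ i (by simp [hk])
    rw [if_neg (by omega)]
    rcases Nat.eq_zero_or_pos k with rfl | hk₀
    · have hempty : Ioo ⟨0, ht⟩ i = ∅ := by
        ext x
        simp only [mem_Ioo, Fin.lt_def, notMem_empty, iff_false]
        omega
      rw [hempty, sum_empty]
      linarith
    · have hinsert : Ioo ⟨0, ht⟩ i = insert ⟨k, hkt⟩ (Ioo ⟨0, ht⟩ ⟨k, hkt⟩) := by
        ext x
        simp only [mem_Ioo, mem_insert, Fin.lt_def, Fin.ext_iff]
        omega
      have hprev := ih ⟨k, hkt⟩ rfl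
      rw [if_neg hk₀.ne'] at hprev
      rw [hinsert, sum_insert (by simp)]
      linarith

namespace AllowableSeq

variable {N n : ℕ}

lemma exists_perm_apply_val_eq (A : AllowableSeq N) (i : ℤ) {x : ℕ} (hx : x < N) :
    ∃ p, (A.perm i p : ℕ) = x :=
  ⟨(A.perm i).symm ⟨x, hx⟩, by simp⟩

lemma card_filter_perm_mem_Ico (A : AllowableSeq N) (i : ℤ) {lo hi : ℕ} (h : hi ≤ N) :
    #{p | lo ≤ (A.perm i p : ℕ) ∧ (A.perm i p : ℕ) < hi} = hi - lo := by
  rw [← Nat.card_Ico lo hi]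
  refine card_bij (fun p _ => (A.perm i p : ℕ)) (fun p hp => by simpa using hp)
    (fun p _ q _ hpq => (A.perm i).injective (Fin.ext hpq)) fun x hx => ?_
  rw [mem_Ico] at hx
  obtain ⟨p, hp⟩ := A.exists_perm_apply_val_eq i (x := x) (by omega)
  exact ⟨p, by simp [hp, hx], hp⟩

lemma perm_add_period {A : AllowableSeq (2 * n)} (henc : A.h = 2 * n) (i : ℤ)
    (p : Fin (2 * n)) : (A.perm (i + 2 * n) p : ℕ) = 2 * n - 1 - A.perm i p := by
  simpa [henc] using A.reversal i p

def CrossesCenter (A : AllowableSeq (2 * n)) (i : ℤ) (p : Fin (2 * n)) : Prop :=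
  ¬ ((A.perm (i - 1) p : ℕ) < n ↔ (A.perm i p : ℕ) < n)

lemma crossesCenter_add_period {A : AllowableSeq (2 * n)} (henc : A.h = 2 * n) (i : ℤ)
    (p : Fin (2 * n)) : A.CrossesCenter (i + 2 * n) p ↔ A.CrossesCenter i p := by
  have h₁ := perm_add_period henc (i - 1) p
  have h₂ := perm_add_period henc i p
  have := (A.perm (i - 1) p).isLt
  have := (A.perm i p).isLt
  unfold CrossesCenter
  rw [show i + 2 * n - 1 = i - 1 + 2 * n by ring]
  omega

end AllowableSeq

open AllowableSeq

section CentrallySymmetric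

variable {n : ℕ} {A : AllowableSeq (2 * n)} {conj : Fin (2 * n) → Fin (2 * n)}

namespace CentSym

lemma perm_conj (hcs : CentSym A conj) (i : ℤ) (p : Fin (2 * n)) :
    (A.perm i (conj p) : ℕ) = 2 * n - 1 - A.perm i p := by
  have := hcs i p
  omega

lemma conj_ne (hcs : CentSym A conj) (p : Fin (2 * n)) : conj p ≠ p := by
  intro h
  have := hcs 0 p
  rw [h] at this
  have := p.isLt
  omega

lemma flips_conj_iff (hcs : CentSym A conj) (i : ℤ) (p : Fin (2 * n)) :
    Flips A i p (conj p) ↔ A.CrossesCenter i p := by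
  have := hcs (i - 1) p
  have := hcs i p
  simp only [Flips, CrossesCenter, Fin.lt_def]
  omega

lemma existsUnique_crossesCenter (hcs : CentSym A conj) (henc : A.h = 2 * n)
    (p : Fin (2 * n)) : ∃! i, i ∈ Icc (1 : ℤ) (2 * n) ∧ A.CrossesCenter i p := by
  refine (existsUnique_congr fun i => ?_).mp (A.flip_once p (conj p) (hcs.conj_ne p).symm)
  rw [henc, ← hcs.flips_conj_iff]
  push_cast
  rfl

end CentSym

namespace CrossingAt

variable {i : ℤ} {e e' : ℕ} {p : Fin (2 * n)}

lemma le (h : CrossingAt n A i e) (h' : CrossingAt n A i e') : e' ≤ e := by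
  obtain ⟨-, -, -, hmax⟩ := h
  obtain ⟨-, he', hrev', -⟩ := h'
  by_contra hlt
  rcases hmax with rfl | hmax
  · omega
  obtain ⟨q, hq⟩ := A.exists_perm_apply_val_eq (i - 1) (x := n - e - 1) (by omega)
  exact hmax q hq (by rw [hrev' q (by omega) (by omega)]; omega)

lemma eq (h : CrossingAt n A i e) (h' : CrossingAt n A i e') : e = e' :=
  le_antisymm (h'.le h) (h.le h')

lemma crossesCenter (h : CrossingAt n A i e) (h₁ : n - e ≤ (A.perm (i - 1) p : ℕ))
    (h₂ : (A.perm (i - 1) p : ℕ) < n + e) : A.CrossesCenter i p := by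
  have := h.2.2.1 p h₁ h₂
  unfold CrossesCenter
  omega

/-- The reversed block is mapped onto itself. -/
lemma perm_pred_eq (h : CrossingAt n A i e) (h₁ : n - e ≤ (A.perm i p : ℕ))
    (h₂ : (A.perm i p : ℕ) < n + e) : (A.perm (i - 1) p : ℕ) = 2 * n - 1 - A.perm i p := by
  obtain ⟨-, hen, hrev, -⟩ := h
  obtain ⟨q, hq⟩ := A.exists_perm_apply_val_eq (i - 1) (x := 2 * n - 1 - A.perm i p) (by omega)
  have hqp : q = p :=
    (A.perm i).injective (Fin.ext (by rw [hrev q (by omega) (by omega)]; omega))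
  rwa [hqp] at hq

lemma mem_block_of_crossesCenter (hgen : NoncentralGenPos n A) (h : CrossingAt n A i e)
    (hp : A.CrossesCenter i p) :
    n - e ≤ (A.perm (i - 1) p : ℕ) ∧ (A.perm (i - 1) p : ℕ) < n + e := by
  have he := h.1
  unfold CrossesCenter at hp
  rcases hgen i p (by omega) with hstep | ⟨e', he', hblock⟩
  · omega
  · rwa [← he'.eq h]

lemma crossesCenter_iff (hgen : NoncentralGenPos n A) (h : CrossingAt n A i e) :
    A.CrossesCenter i p ↔ n - e ≤ (A.perm (i - 1) p : ℕ) ∧ (A.perm (i - 1) p : ℕ) < n + e :=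
  ⟨h.mem_block_of_crossesCenter hgen, fun hp => h.crossesCenter hp.1 hp.2⟩

lemma add_period (henc : A.h = 2 * n) (hgen : NoncentralGenPos n A) (h : CrossingAt n A i e) :
    CrossingAt n A (i + 2 * n) e := by
  obtain ⟨he, hen, hrev, hmax⟩ := id h
  have hpred : i + 2 * n - 1 = i - 1 + 2 * n := by ring
  refine ⟨he, hen, fun q hq₁ hq₂ => ?_, hmax.imp_right fun _ q hq₁ hq₂ => ?_⟩
  · rw [hpred, perm_add_period henc] at hq₁ hq₂ ⊢
    have := hrev q (by omega) (by omega)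
    rw [perm_add_period henc]
    omega
  · rw [hpred, perm_add_period henc] at hq₁
    rw [perm_add_period henc] at hq₂
    have := (A.perm (i - 1) q).isLt
    have := h.mem_block_of_crossesCenter hgen (p := q) (by unfold CrossesCenter; omega)
    omega

end CrossingAt

namespace NoncentralGenPos

variable {j : ℤ} {p : Fin (2 * n)}

lemma dist_le_one (hgen : NoncentralGenPos n A) (hnc : ∀ e, ¬ CrossingAt n A j e)
    (p : Fin (2 * n)) :
    (A.perm j p : ℕ) ≤ A.perm (j - 1) p + 1 ∧ (A.perm (j - 1) p : ℕ) ≤ A.perm j p + 1 := by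
  by_cases hmove : (A.perm j p : ℕ) = A.perm (j - 1) p
  · omega
  · rcases hgen j p hmove with hstep | ⟨e, he, -⟩
    · omega
    · exact absurd he (hnc e)

/-- A point stepping across the center is swapped with its conjugate, which already is a
crossing switch of half-length `1`. -/
lemma exists_crossingAt (hgen : NoncentralGenPos n A) (hcs : CentSym A conj)
    (h₁ : (A.perm (j - 1) p : ℕ) = n - 1) (h₂ : (A.perm j p : ℕ) = n) :
    ∃ e, CrossingAt n A j e := by
  by_contra! hnc
  have hn : 0 < n := by have := (A.perm j p).isLt; omega
  have hc₁ := hcs.perm_conj (j - 1) p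
  have hc₂ := hcs.perm_conj j p
  refine hnc 1 ⟨le_rfl, hn, fun q hq₁ hq₂ => ?_, ?_⟩
  · obtain rfl | rfl : q = p ∨ q = conj p := by
      rcases Nat.lt_or_ge (A.perm (j - 1) q : ℕ) n with hq | hq
      · exact .inl ((A.perm (j - 1)).injective (Fin.ext (by omega)))
      · exact .inr ((A.perm (j - 1)).injective (Fin.ext (by omega)))
    all_goals omega
  · refine (eq_or_ne 1 n).imp_right fun _ q hq => ?_
    have := hgen.dist_le_one hnc q
    omega

lemma not_crossesCenter (hgen : NoncentralGenPos n A) (hcs : CentSym A conj)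
    (hnc : ∀ e, ¬ CrossingAt n A j e) (p : Fin (2 * n)) : ¬ A.CrossesCenter j p := by
  intro hp
  have hc₁ := hcs.perm_conj (j - 1) p
  have hc₂ := hcs.perm_conj j p
  have := hgen.dist_le_one hnc p
  have := (A.perm j p).isLt
  unfold CrossesCenter at hp
  obtain ⟨e, he⟩ : ∃ e, CrossingAt n A j e := by
    rcases Nat.lt_or_ge (A.perm (j - 1) p : ℕ) n with h | h
    · exact hgen.exists_crossingAt hcs (p := p) (by omega) (by omega)
    · exact hgen.exists_crossingAt hcs (p := conj p) (by omega) (by omega)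
  exact hnc e he

lemma same_side_and_dist_le (hgen : NoncentralGenPos n A) (hcs : CentSym A conj) {s : ℤ}
    (k : ℕ) (hnc : ∀ j, s < j → j ≤ s + k → ∀ e, ¬ CrossingAt n A j e) (p : Fin (2 * n)) :
    ((A.perm s p : ℕ) < n ↔ (A.perm (s + k) p : ℕ) < n) ∧
      (A.perm (s + k) p : ℕ) ≤ A.perm s p + k ∧ (A.perm s p : ℕ) ≤ A.perm (s + k) p + k := by
  induction k with
  | zero => simp
  | succ k ih =>
    have hnc' : ∀ e, ¬ CrossingAt n A (s + k + 1) e := hnc _ (by omega) (by push_cast; omega)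
    have hside := hgen.not_crossesCenter hcs hnc' p
    have hdist := hgen.dist_le_one hnc' p
    have := ih fun j hj₁ hj₂ => hnc j hj₁ (by push_cast; omega)
    unfold CrossesCenter at hside
    rw [add_sub_cancel_right] at hside hdist
    push_cast
    rw [← add_assoc]
    omega

/-- If the gap were smaller than `a + b`, a suitable point at position `n - 1` would have been
in the right half of the first reversed block and would still be in the left half of the
second one, so it would cross the center twice. -/
lemma add_le_of_crossingAt (hgen : NoncentralGenPos n A) (hcs : CentSym A conj)
    {M₁ M₂ : ℤ} {a b : ℕ} (hlt : M₁ < M₂) (ha : CrossingAt n A M₁ a)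
    (hb : CrossingAt n A M₂ b) (hnc : ∀ j, M₁ < j → j < M₂ → ∀ e, ¬ CrossingAt n A j e)
    (honce : ∀ p, A.CrossesCenter M₁ p → ¬ A.CrossesCenter M₂ p) : M₁ + a + b ≤ M₂ := by
  by_contra! hgap
  have ha₁ := ha.1
  have hb₁ := hb.1
  have hbn := hb.2.1
  set k₁ : ℕ := min (a - 1) (M₂ - 1 - M₁).toNat
  set k₂ : ℕ := (M₂ - 1 - M₁).toNat - k₁
  obtain ⟨p, hp⟩ := A.exists_perm_apply_val_eq (M₁ + k₁) (x := n - 1) (by omega)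
  have h₁ := hgen.same_side_and_dist_le hcs k₁ (fun j hj₁ hj₂ => hnc j hj₁ (by omega)) p
  have h₂ := hgen.same_side_and_dist_le hcs (s := M₁ + k₁) k₂
    (fun j hj₁ hj₂ => hnc j (by omega) (by omega)) p
  rw [show M₁ + k₁ + k₂ = M₂ - 1 by omega] at h₂
  have hleft := ha.perm_pred_eq (p := p) (by omega) (by omega)
  refine honce p (ha.crossesCenter (p := p) (by omega) (by omega)) (hb.crossesCenter ?_ ?_)
  all_goals omega

end NoncentralGenPos

namespace HasCentralSignature

section

variable {t : ℕ} {d : Fin t → ℕ} {m : Fin t → ℤ}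

lemma crossesCenter_unique (hsig : HasCentralSignature n t A d m) (hcs : CentSym A conj)
    (henc : A.h = 2 * n) {i j : Fin t} {p : Fin (2 * n)} (hi : A.CrossesCenter (m i) p)
    (hj : A.CrossesCenter (m j) p) : i = j :=
  hsig.1.injective ((hcs.existsUnique_crossesCenter henc p).unique ⟨hsig.2.1 i, hi⟩
    ⟨hsig.2.1 j, hj⟩)

lemma sum_eq (hsig : HasCentralSignature n t A d m) (hcs : CentSym A conj)
    (henc : A.h = 2 * n) (hgen : NoncentralGenPos n A) : ∑ i, d i = n := by
  classical
  obtain ⟨-, -, hcross, hnone⟩ := id hsig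
  set S : Fin t → Finset (Fin (2 * n)) := fun i => {p | A.CrossesCenter (m i) p}
  have hcard (i : Fin t) : #(S i) = 2 * d i := by
    have := (hcross i).1
    have := (hcross i).2.1
    simp only [S, (hcross i).crossesCenter_iff hgen]
    rw [A.card_filter_perm_mem_Ico _ (by omega)]
    omega
  have hdisj : ((univ : Finset (Fin t)) : Set (Fin t)).PairwiseDisjoint S := by
    intro i _ j _ hij
    refine disjoint_left.mpr fun p hi hj => hij ?_
    simp only [S, mem_filter, mem_univ, true_and] at hi hj
    exact hsig.crossesCenter_unique hcs henc hi hj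
  have hcover : univ.biUnion S = univ := by
    refine eq_univ_of_forall fun p => ?_
    obtain ⟨i, ⟨hi, hp⟩, -⟩ := hcs.existsUnique_crossesCenter henc p
    obtain ⟨k, rfl⟩ : ∃ k, m k = i := by
      by_contra! hk
      exact hgen.not_crossesCenter hcs (hnone i hi fun k => (hk k).symm) p hp
    exact mem_biUnion.mpr ⟨k, mem_univ _, by simpa [S] using hp⟩
  have := card_biUnion hdisj
  rw [hcover, card_univ, Fintype.card_fin] at this
  simp only [hcard, ← mul_sum] at this
  omega

lemma add_le_of_succ_eq (hsig : HasCentralSignature n t A d m) (hcs : CentSym A conj)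
    (henc : A.h = 2 * n) (hgen : NoncentralGenPos n A) {i j : Fin t} (hij : (i : ℕ) + 1 = j) :
    m i + d i + d j ≤ m j := by
  obtain ⟨hmono, hmem, hcross, hnone⟩ := id hsig
  have hlt : i < j := Fin.lt_def.mpr (by omega)
  refine hgen.add_le_of_crossingAt hcs (hmono hlt) (hcross i) (hcross j) (fun x hx₁ hx₂ => ?_)
    fun p h₁ h₂ => hlt.ne (hsig.crossesCenter_unique hcs henc h₁ h₂)
  have := mem_Icc.mp (hmem i)
  have := mem_Icc.mp (hmem j)
  refine hnone x (mem_Icc.mpr ⟨by omega, by omega⟩) fun k hk => ?_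
  rcases le_or_gt k i with hki | hki
  · have := hmono.monotone hki
    omega
  · have := hmono.monotone (Fin.le_def.mpr (by rw [Fin.lt_def] at hki; omega) : j ≤ k)
    omega

end

/-- The crossing switch following the last one is the first one of the next halfperiod, in
move `m 0 + 2 * n = 2 * n + 1`. -/
lemma add_le_of_last {t : ℕ} {d : Fin (t + 1) → ℕ} {m : Fin (t + 1) → ℤ}
    (hsig : HasCentralSignature n (t + 1) A d m) (hcs : CentSym A conj) (henc : A.h = 2 * n)
    (hgen : NoncentralGenPos n A) (hfirst : m 0 = 1) (ht : 0 < t) :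
    m (Fin.last t) + d (Fin.last t) + d 0 ≤ 1 + 2 * n := by
  obtain ⟨hmono, hmem, hcross, hnone⟩ := id hsig
  have hlast := mem_Icc.mp (hmem (Fin.last t))
  have hnext := (hcross 0).add_period henc hgen
  rw [hfirst] at hnext
  refine hgen.add_le_of_crossingAt hcs (by omega) (hcross _) hnext (fun x hx₁ hx₂ => ?_)
    fun p h₁ h₂ => ?_
  · refine hnone x (mem_Icc.mpr ⟨by omega, by omega⟩) fun k hk => ?_
    have := hmono.monotone (Fin.le_last k)
    omega
  · rw [crossesCenter_add_period henc, ← hfirst] at h₂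
    have := congrArg Fin.val (hsig.crossesCenter_unique hcs henc h₁ h₂)
    simp only [Fin.val_last, Fin.val_zero] at this
    omega

lemma le_cyclic_gap {t : ℕ} {d : Fin (t + 1) → ℕ} {m : Fin (t + 1) → ℤ}
    (hsig : HasCentralSignature n (t + 1) A d m) (hcs : CentSym A conj) (henc : A.h = 2 * n)
    (hgen : NoncentralGenPos n A) (hfirst : m 0 = 1) (i : Fin (t + 1)) :
    (d i + d (finRotate _ i) : ℤ) ≤
      m (finRotate _ i) - m i + if i = Fin.last t then (2 * n : ℤ) else 0 := by
  by_cases hi : i = Fin.last t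
  · subst hi
    rw [finRotate_last, if_pos rfl]
    rcases Nat.eq_zero_or_pos t with rfl | ht
    · have := (hsig.2.2.1 0).2.1
      simp only [Fin.last_zero, sub_self, zero_add]
      omega
    · have := hsig.add_le_of_last hcs henc hgen hfirst ht
      omega
  · rw [if_neg hi, add_zero]
    have := hsig.add_le_of_succ_eq hcs henc hgen (coe_finRotate_of_ne_last hi).symm
    omega

end HasCentralSignature

end CentrallySymmetric

theorem stmt_12_general (n t : ℕ) (ht : 0 < t) (A : AllowableSeq (2 * n))
    (conj : Fin (2 * n) → Fin (2 * n)) (hcs : CentSym A conj)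
    (henc : A.h = 2 * n) (hgen : NoncentralGenPos n A)
    (d : Fin t → ℕ) (m : Fin t → ℤ) (hsig : HasCentralSignature n t A d m)
    (hfirst : m ⟨0, ht⟩ = 1) :
    (∀ i : Fin t, m i =
      (if (i : ℕ) = 0 then 0 else
        (d ⟨0, ht⟩ : ℤ) + 2 * (∑ j ∈ Finset.Ioo (⟨0, ht⟩ : Fin t) i, (d j : ℤ)) + d i) + 1) ∧
    (∀ i j : Fin t, (i : ℕ) + 1 = (j : ℕ) → m j - m i = d i + d j) := by
  obtain ⟨t, rfl⟩ := Nat.exists_eq_add_one_of_ne_zero ht.ne'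
  have hgap := cyclic_gap_eq_of_le_of_sum_eq m (fun i => d i + d (finRotate _ i)) (2 * n)
    (hsig.le_cyclic_gap hcs henc hgen hfirst) (by
      simp only [sum_add_distrib, Equiv.sum_comp (finRotate _) fun i => (d i : ℤ)]
      rw [← Nat.cast_sum, hsig.sum_eq hcs henc hgen]
      ring)
  have hsucc (i j : Fin (t + 1)) (hij : (i : ℕ) + 1 = j) : m j - m i = d i + d j := by
    have hi : i ≠ Fin.last t := fun h => by
      have := j.isLt
      rw [h, Fin.val_last] at hij
      omega
    have := hgap i
    rw [if_neg hi, show finRotate _ i = j from Fin.ext (by rw [coe_finRotate_of_ne_last hi, hij])]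
      at this
    omega
  exact ⟨eq_closed_form_of_succ_sub_eq ht d m hfirst hsucc, hsucc⟩

/-- In an even-near-critical centrally symmetric allowable sequence of `2n` points in
noncentral general position with central signature `(d 0, …, d (t-1))` and first
crossing switch in the first move, the `i`-th crossing switch occurs in move `δ i + 1`
(taking `π_{δ i}` to `π_{δ i + 1}`), where `δ 0 = 0` and
`δ i = d 0 + 2 (d 1 + ⋯ + d (i-1)) + d i` for `i ≥ 1`; equivalently, consecutive
crossing switches are separated by exactly `d i + d (i+1) - 1` permutations. -/
theorem stmt_12 (n t : ℕ) (hn : 0 < n) (ht : 0 < t) (A : AllowableSeq (2 * n))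
    (conj : Fin (2 * n) → Fin (2 * n)) (hcs : CentSym A conj)
    (henc : A.h = 2 * n) (hgen : NoncentralGenPos n A)
    (d : Fin t → ℕ) (m : Fin t → ℤ) (hsig : HasCentralSignature n t A d m)
    (hfirst : m ⟨0, ht⟩ = 1) :
    (∀ i : Fin t, m i =
      (if (i : ℕ) = 0 then 0 else
        (d ⟨0, ht⟩ : ℤ) + 2 * (∑ j ∈ Finset.Ioo (⟨0, ht⟩ : Fin t) i, (d j : ℤ)) + d i) + 1) ∧
    (∀ i j : Fin t, (i : ℕ) + 1 = (j : ℕ) → m j - m i = d i + d j) :=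
  stmt_12_general n t ht A conj hcs henc hgen d m hsig hfirst
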